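/- Let 𝕂 be a field of characteristic zero and let ℓ be a homomorphism of monoids from the positive integers under multiplication to 𝕂ˣ. Let E and L be finite groups admitting at least one surjective group homomorphism L → E, and suppose that the family of elements (ℓ(q)), where q runs over the prime divisors of |L|, is algebraically independent over ℚ (viewing ℚ as the minimal subfield of 𝕂). For surjective homomorphisms φ, ψ : L → E set I_φ = {(φ(x), x) : x ∈ L} ≤ E × L, J_ψ = {(x, ψ(x)) : x ∈ L} ≤ L × E, and let Δ(E) = {(e, e) : e ∈ E} ≤ E × E. Then the square matrix T, whose rows and columns are indexed by the surjective homomorphisms L → E and whose (φ, ψ)-entry is τ_{Δ(E)}^{I_φ, J_ψ}, has nonzero determinant, i.e., T is invertible. -/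

import Mathlib

/-!
Every entry of the matrix is an integer combination of values `ℓ(d)`, where
`d = |k₂(U) ∩ k₁(V)|` divides `|ker φ| = |L|/|E| =: m`, and `ℓ(d) = ∏_q ℓ(q) ^ v_q(d)`.
By algebraic independence it suffices to show that the same matrix with `ℓ(q)` replaced by
an indeterminate `X_q` has nonzero determinant, and then that this holds after sending every
`X_q` to a single `X`, which turns `ℓ(d)` into `X ^ Ω(d)`. The entries then have degree at most
`Ω(m)`, and a term of degree `Ω(m)` needs `d = m`, i.e. `k₂(U) ∩ k₁(V) = ker φ = ker ψ`, which
forces `φ = ψ`, `U = I_φ` and `V = J_φ`. So the coefficients of `X ^ Ω(m)` form the identity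
matrix and the determinant has leading coefficient `1`.
-/

open scoped Classical

namespace SubgroupCat

variable {R S T : Type*}

/-- The star product of subgroups `U ≤ R × S` and `V ≤ S × T`:
`U * V = {(r, t) | ∃ s, (r, s) ∈ U ∧ (s, t) ∈ V}`. -/
def starProd [Group R] [Group S] [Group T] (U : Subgroup (R × S)) (V : Subgroup (S × T)) :
    Subgroup (R × T) where
  carrier := {rt | ∃ s : S, (rt.1, s) ∈ U ∧ (s, rt.2) ∈ V}
  one_mem' := ⟨1, one_mem U, one_mem V⟩
  mul_mem' := by
    rintro a b ⟨s, hU, hV⟩ ⟨s', hU', hV'⟩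
    exact ⟨s * s', mul_mem hU hU', mul_mem hV hV'⟩
  inv_mem' := by
    rintro a ⟨s, hU, hV⟩
    exact ⟨s⁻¹, inv_mem hU, inv_mem hV⟩

@[simp] lemma mem_starProd [Group R] [Group S] [Group T] {U : Subgroup (R × S)}
    {V : Subgroup (S × T)} {p : R × T} :
    p ∈ starProd U V ↔ ∃ s : S, (p.1, s) ∈ U ∧ (s, p.2) ∈ V := Iff.rfl

/-- First projection `p₁(U) = {r | ∃ s, (r, s) ∈ U}`. -/
def p1 [Group R] [Group S] (U : Subgroup (R × S)) : Subgroup R :=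
  U.map (MonoidHom.fst R S)

/-- Second projection `p₂(U) = {s | ∃ r, (r, s) ∈ U}`. -/
def p2 [Group R] [Group S] (U : Subgroup (R × S)) : Subgroup S :=
  U.map (MonoidHom.snd R S)

/-- First kernel `k₁(U) = {r | (r, 1) ∈ U}`. -/
def k1 [Group R] [Group S] (U : Subgroup (R × S)) : Subgroup R :=
  U.comap (MonoidHom.inl R S)

/-- Second kernel `k₂(U) = {s | (1, s) ∈ U}`. -/
def k2 [Group R] [Group S] (U : Subgroup (R × S)) : Subgroup S :=
  U.comap (MonoidHom.inr R S)

/-- The Möbius function of a finite poset: `pmoeb u i` is `möb(u, i)`. -/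
noncomputable def pmoeb {P : Type*} [PartialOrder P] [Finite P] (u i : P) : ℤ :=
  if u = i then 1
  else if u < i then
    - ∑ v ∈ ({v : P | u < v ∧ v ≤ i}.toFinite.toFinset).attach, pmoeb v.1 i
  else 0
termination_by Nat.card {w : P // u ≤ w}
decreasing_by
  · have hv := v.2
    rw [Set.Finite.mem_toFinset] at hv
    have hlt : u < (v : P) := hv.1
    have hsub : {w : P | (v : P) ≤ w} ⊂ {w : P | u ≤ w} :=
      ⟨fun w hw => le_trans hlt.le hw,
       fun hcon => absurd (hcon (le_refl u)) (by exact fun h => lt_irrefl u (lt_of_lt_of_le (hlt : u < (v : P)) h))⟩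
    rw [show {w : P // (v : P) ≤ w} = ↑{w : P | (v : P) ≤ w} from rfl,
      show {w : P // u ≤ w} = ↑{w : P | u ≤ w} from rfl,
      Nat.card_coe_set_eq, Nat.card_coe_set_eq]
    exact Set.ncard_lt_ncard hsub (Set.toFinite _)

/-- `möb(U, I)` for subgroups of a finite group: the Möbius function of the
subgroup lattice. -/
noncomputable def moeb {G : Type*} [Group G] [Finite G] (U I : Subgroup G) : ℤ :=
  pmoeb U I

/-- `ℓ(A) = ℓ(|A|)` for a finite group `A`, where `ℓ : ℕ⁺ →* 𝕂ˣ`. -/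
noncomputable def ellG {𝕂 : Type*} [Field 𝕂] (ℓ : ℕ+ →* 𝕂ˣ) (A : Type*) [Group A] [Finite A] :
    𝕂 :=
  (ℓ ⟨Nat.card A, Nat.card_pos⟩ : 𝕂ˣ)

/-- The cocycle `σ(U, V) = ℓ(k₂(U) ∩ k₁(V))`. -/
noncomputable def sigmaC {𝕂 : Type*} [Field 𝕂] (ℓ : ℕ+ →* 𝕂ˣ)
    {F G H : Type*} [Group F] [Group G] [Group H] [Finite G]
    (U : Subgroup (F × G)) (V : Subgroup (G × H)) : 𝕂 :=
  ellG ℓ ↑(k2 U ⊓ k1 V)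

/-- `τ_K^{I,J} = ∑ möb(U,I) · möb(V,J) · σ(U,V)`, the sum being over all pairs
of subgroups `(U, V)` with `U ≤ I`, `V ≤ J` and `K ≤ U * V`. -/
noncomputable def tau {𝕂 : Type*} [Field 𝕂] (ℓ : ℕ+ →* 𝕂ˣ)
    {F G H : Type*} [Group F] [Group G] [Group H] [Finite F] [Finite G] [Finite H]
    (I : Subgroup (F × G)) (J : Subgroup (G × H)) (K : Subgroup (F × H)) : 𝕂 :=
  ∑ᶠ q ∈ {q : Subgroup (F × G) × Subgroup (G × H) |
      q.1 ≤ I ∧ q.2 ≤ J ∧ K ≤ starProd q.1 q.2},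
    (moeb q.1 I : 𝕂) * (moeb q.2 J : 𝕂) * sigmaC ℓ q.1 q.2

/-- The subgroup `{(f x, x) : x ∈ L}` of `E × L`, the graph of `f : L →* E`. -/
def graphL {E L : Type*} [Group E] [Group L] (f : L →* E) : Subgroup (E × L) :=
  (f.prod (MonoidHom.id L)).range

/-- The subgroup `{(x, f x) : x ∈ L}` of `L × E`, the graph of `f : L →* E`. -/
def graphR {E L : Type*} [Group E] [Group L] (f : L →* E) : Subgroup (L × E) :=
  ((MonoidHom.id L).prod f).range

/-- The diagonal subgroup `Δ(E) = {(e, e)} ≤ E × E`. -/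
def diagSubgroup (E : Type*) [Group E] : Subgroup (E × E) :=
  graphL (MonoidHom.id E)

instance {E L : Type*} [Group E] [Group L] [Finite E] [Finite L] : Finite (L →* E) :=
  Finite.of_injective (fun f => (f : L → E)) DFunLike.coe_injective

noncomputable instance {E L : Type*} [Group E] [Group L] [Finite E] [Finite L] :
    Fintype {f : L →* E // Function.Surjective f} :=
  Fintype.ofFinite _

noncomputable instance {E L : Type*} [Group E] [Group L] :
    DecidableEq {f : L →* E // Function.Surjective f} :=
  Classical.decEq _


open Polynomial
open scoped ArithmeticFunction.Omega

theorem _root_.Matrix.coeff_det_of_natDegree_le {n R : Type*} [Fintype n] [DecidableEq n]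
    [CommRing R] (M : Matrix n n R[X]) {k : ℕ} (hM : ∀ i j, (M i j).natDegree ≤ k) :
    M.det.coeff (Fintype.card n * k) = (M.map fun p => p.coeff k).det := by
  simp only [Matrix.det_apply, finsetSum_coeff, Matrix.map_apply, Units.smul_def, coeff_smul]
  refine Finset.sum_congr rfl fun σ _ => ?_
  rw [← Finset.card_univ, coeff_prod_of_natDegree_le _ _ k fun i _ => hM _ i]

theorem _root_.MonoidHom.factorization_prod_pow_toPNat' {M : Type*} [CommMonoid M]
    (f : ℕ+ →* M) {n : ℕ} (hn : n ≠ 0) :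
    n.factorization.prod (fun p k => f p.toPNat' ^ k) = f n.toPNat' := by
  have hprod : n.toPNat' = n.factorization.prod fun p k => p.toPNat' ^ k := by
    apply PNat.coe_injective
    rw [← PNat.coe_coeMonoidHom, map_finsuppProd, PNat.coe_coeMonoidHom,
      Nat.toPNat'_coe, if_pos (Nat.pos_of_ne_zero hn)]
    conv_lhs => rw [← Nat.prod_factorization_pow_eq_self hn]
    refine Finsupp.prod_congr fun p hp => ?_
    rw [PNat.pow_coe, PNat.toPNat'_coe (Nat.prime_of_mem_primeFactors hp).pos]
  rw [hprod, map_finsuppProd]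
  simp only [map_pow]

theorem _root_.ArithmeticFunction.cardFactors_le_of_dvd {d m : ℕ} (hm : m ≠ 0) (h : d ∣ m) :
    Ω d ≤ Ω m := by
  obtain ⟨k, rfl⟩ := h
  rw [ArithmeticFunction.cardFactors_mul (left_ne_zero_of_mul hm) (right_ne_zero_of_mul hm)]
  omega

theorem _root_.ArithmeticFunction.cardFactors_eq_iff_of_dvd {d m : ℕ} (hm : m ≠ 0) (h : d ∣ m) :
    Ω d = Ω m ↔ d = m := by
  refine ⟨fun hΩ => ?_, congrArg Ω⟩
  obtain ⟨k, rfl⟩ := h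
  rw [ArithmeticFunction.cardFactors_mul (left_ne_zero_of_mul hm) (right_ne_zero_of_mul hm),
    left_eq_add, ArithmeticFunction.cardFactors_eq_zero_iff_eq_zero_or_one] at hΩ
  rcases hΩ with rfl | rfl
  · simp at hm
  · rw [mul_one]

/-- The monomial `∏_{q ∣ N} X_q ^ v_q(d)`. -/
noncomputable def _root_.Nat.factorizationMonomial (R : Type*) [CommSemiring R] (N d : ℕ) :
    MvPolynomial {q : ℕ // q.Prime ∧ q ∣ N} R :=
  MvPolynomial.monomial (d.factorization.subtypeDomain fun q => q.Prime ∧ q ∣ N) 1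

theorem _root_.Nat.aeval_factorizationMonomial {R A : Type*} [CommSemiring R] [CommSemiring A]
    [Algebra R A] (y : ℕ → A) {N d : ℕ} (hd : d ∣ N) :
    MvPolynomial.aeval (fun q : {q : ℕ // q.Prime ∧ q ∣ N} => y q)
      (Nat.factorizationMonomial R N d) = d.factorization.prod fun p k => y p ^ k := by
  rw [Nat.factorizationMonomial, MvPolynomial.aeval_monomial, map_one, one_mul]
  refine Finsupp.prod_subtypeDomain_index (h := fun p k => y p ^ k) fun p hp => ?_
  rw [Nat.support_factorization] at hp
  exact ⟨Nat.prime_of_mem_primeFactors hp, (Nat.dvd_of_mem_primeFactors hp).trans hd⟩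

theorem _root_.Nat.aeval_factorizationMonomial_eq_toPNat' {R A : Type*} [CommSemiring R]
    [CommSemiring A] [Algebra R A] (f : ℕ+ →* A) {N d : ℕ} (hN : N ≠ 0) (hd : d ∣ N) :
    MvPolynomial.aeval (fun q : {q : ℕ // q.Prime ∧ q ∣ N} => f ⟨q.1, q.2.1.pos⟩)
      (Nat.factorizationMonomial R N d) = f d.toPNat' := by
  have hf : (fun q : {q : ℕ // q.Prime ∧ q ∣ N} => f ⟨q.1, q.2.1.pos⟩) =
      fun q => f q.1.toPNat' :=
    funext fun q => congrArg f (PNat.coe_toPNat' ⟨q.1, q.2.1.pos⟩).symm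
  rw [hf, Nat.aeval_factorizationMonomial (fun p => f p.toPNat') hd,
    f.factorization_prod_pow_toPNat' (ne_zero_of_dvd_ne_zero hN hd)]

theorem _root_.Nat.aeval_X_factorizationMonomial {R : Type*} [CommSemiring R] {N d : ℕ}
    (hd : d ∣ N) :
    MvPolynomial.aeval (fun _ : {q : ℕ // q.Prime ∧ q ∣ N} => (X : R[X]))
      (Nat.factorizationMonomial R N d) = X ^ Ω d := by
  rw [Nat.aeval_factorizationMonomial (fun _ => X) hd,
    ArithmeticFunction.cardFactors_eq_sum_factorization, Finsupp.prod, Finsupp.sum,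
    Finset.prod_pow_eq_pow_sum]

section Graphs

variable {E L : Type*} [Group E] [Group L] {φ ψ : L →* E}

theorem mem_graphL {p : E × L} : p ∈ graphL φ ↔ φ p.2 = p.1 := by
  simp [graphL, Prod.ext_iff, eq_comm]

theorem mem_graphR {p : L × E} : p ∈ graphR φ ↔ φ p.1 = p.2 := by
  simp [graphR, Prod.ext_iff]

theorem mem_diagSubgroup {p : E × E} : p ∈ diagSubgroup E ↔ p.1 = p.2 := by
  rw [diagSubgroup, mem_graphL, MonoidHom.id_apply, eq_comm]

theorem k2_graphL (φ : L →* E) : k2 (graphL φ) = φ.ker := by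
  ext x
  simp [k2, mem_graphL, eq_comm]

theorem k1_graphR (φ : L →* E) : k1 (graphR φ) = φ.ker := by
  ext x
  simp [k1, mem_graphR]

theorem k2_le_ker {U : Subgroup (E × L)} (hU : U ≤ graphL φ) : k2 U ≤ φ.ker :=
  (Subgroup.comap_mono hU).trans (k2_graphL φ).le

theorem k1_le_ker {V : Subgroup (L × E)} (hV : V ≤ graphR φ) : k1 V ≤ φ.ker :=
  (Subgroup.comap_mono hV).trans (k1_graphR φ).le

theorem p1_eq_top_of_diagSubgroup_le {U : Subgroup (E × L)} {V : Subgroup (L × E)}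
    (h : diagSubgroup E ≤ starProd U V) : p1 U = ⊤ := by
  refine eq_top_iff.mpr fun e _ => ?_
  obtain ⟨s, hs, -⟩ := h (mem_diagSubgroup.mpr rfl : (e, e) ∈ diagSubgroup E)
  exact ⟨_, hs, rfl⟩

theorem p2_eq_top_of_diagSubgroup_le {U : Subgroup (E × L)} {V : Subgroup (L × E)}
    (h : diagSubgroup E ≤ starProd U V) : p2 V = ⊤ := by
  refine eq_top_iff.mpr fun e _ => ?_
  obtain ⟨s, -, hs⟩ := h (mem_diagSubgroup.mpr rfl : (e, e) ∈ diagSubgroup E)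
  exact ⟨_, hs, rfl⟩

theorem diagSubgroup_le_starProd_graph (hφ : Function.Surjective φ) :
    diagSubgroup E ≤ starProd (graphL φ) (graphR φ) := by
  rintro ⟨e, e'⟩ h
  obtain rfl : e = e' := mem_diagSubgroup.mp h
  obtain ⟨s, hs⟩ := hφ e
  exact ⟨s, mem_graphL.mpr hs, mem_graphR.mpr hs⟩

theorem eq_of_diagSubgroup_le_starProd_graph
    (h : diagSubgroup E ≤ starProd (graphL φ) (graphR ψ)) (hker : φ.ker ≤ ψ.ker) : φ = ψ := by
  ext x
  obtain ⟨s, hφs, hψs⟩ := h (mem_diagSubgroup.mpr rfl : (φ x, φ x) ∈ diagSubgroup E)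
  rw [mem_graphL] at hφs
  rw [mem_graphR] at hψs
  have hxs : x * s⁻¹ ∈ ψ.ker :=
    hker <| by rw [MonoidHom.mem_ker, map_mul, map_inv, hφs, mul_inv_cancel]
  rw [MonoidHom.mem_ker, map_mul, map_inv, mul_inv_eq_one] at hxs
  rw [hxs, hψs]

theorem graphL_le_of_ker_le {U : Subgroup (E × L)} (hU : U ≤ graphL φ) (hU₁ : p1 U = ⊤)
    (hker : φ.ker ≤ k2 U) : graphL φ ≤ U := by
  rintro ⟨e, x⟩ hx
  rw [mem_graphL] at hx
  obtain ⟨⟨e', s⟩, hs, rfl⟩ : e ∈ p1 U := hU₁ ▸ Subgroup.mem_top e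
  have hφs : φ s = e' := mem_graphL.mp (hU hs)
  have h1 : ((1 : E), x * s⁻¹) ∈ U :=
    hker <| by rw [MonoidHom.mem_ker, map_mul, map_inv, hx, hφs]; exact mul_inv_cancel _
  simpa using mul_mem h1 hs

theorem graphR_le_of_ker_le {V : Subgroup (L × E)} (hV : V ≤ graphR φ) (hV₂ : p2 V = ⊤)
    (hker : φ.ker ≤ k1 V) : graphR φ ≤ V := by
  rintro ⟨x, e⟩ hx
  rw [mem_graphR] at hx
  obtain ⟨⟨s, e'⟩, hs, rfl⟩ : e ∈ p2 V := hV₂ ▸ Subgroup.mem_top e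
  have hφs : φ s = e' := mem_graphR.mp (hV hs)
  have h1 : (x * s⁻¹, (1 : E)) ∈ V :=
    hker <| by rw [MonoidHom.mem_ker, map_mul, map_inv, hx, hφs]; exact mul_inv_cancel _
  simpa using mul_mem h1 hs

theorem starProd_mono {R S T : Type*} [Group R] [Group S] [Group T] {U U' : Subgroup (R × S)}
    {V V' : Subgroup (S × T)} (hU : U ≤ U') (hV : V ≤ V') : starProd U V ≤ starProd U' V' :=
  fun _ ⟨s, hs, hs'⟩ => ⟨s, hU hs, hV hs'⟩

variable [Finite E]

theorem card_ker_of_surjective (hφ : Function.Surjective φ) :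
    Nat.card φ.ker = Nat.card L / Nat.card E := by
  rw [← φ.ker.card_mul_index, Subgroup.index_ker, MonoidHom.range_eq_top.mpr hφ,
    Subgroup.card_top, Nat.mul_div_cancel _ Nat.card_pos]

theorem card_inf_dvd {U : Subgroup (E × L)} {V : Subgroup (L × E)} (hφ : Function.Surjective φ)
    (hU : U ≤ graphL φ) : Nat.card ↥(k2 U ⊓ k1 V) ∣ Nat.card L / Nat.card E :=
  card_ker_of_surjective hφ ▸ Subgroup.card_dvd_of_le (inf_le_left.trans (k2_le_ker hU))

variable [Finite L]


theorem eq_graph_of_card_inf_ge {U : Subgroup (E × L)} {V : Subgroup (L × E)}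
    (hφ : Function.Surjective φ) (hψ : Function.Surjective ψ) (hU : U ≤ graphL φ)
    (hV : V ≤ graphR ψ) (hΔ : diagSubgroup E ≤ starProd U V)
    (hcard : Nat.card L / Nat.card E ≤ Nat.card ↥(k2 U ⊓ k1 V)) :
    φ = ψ ∧ U = graphL φ ∧ V = graphR ψ := by
  have hkφ : k2 U ⊓ k1 V = φ.ker := Subgroup.eq_of_le_of_card_ge
    (inf_le_left.trans (k2_le_ker hU)) (card_ker_of_surjective hφ ▸ hcard)
  have hkψ : k2 U ⊓ k1 V = ψ.ker := Subgroup.eq_of_le_of_card_ge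
    (inf_le_right.trans (k1_le_ker hV)) (card_ker_of_surjective hψ ▸ hcard)
  refine ⟨eq_of_diagSubgroup_le_starProd_graph (hΔ.trans (starProd_mono hU hV))
      (hkφ ▸ hkψ ▸ le_rfl), le_antisymm hU ?_, le_antisymm hV ?_⟩
  · exact graphL_le_of_ker_le hU (p1_eq_top_of_diagSubgroup_le hΔ) (hkφ ▸ inf_le_left)
  · exact graphR_le_of_ker_le hV (p2_eq_top_of_diagSubgroup_le hΔ) (hkψ ▸ inf_le_right)

end Graphs

theorem moeb_self {G : Type*} [Group G] [Finite G] (I : Subgroup G) : moeb I I = 1 := by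
  rw [moeb, pmoeb, if_pos rfl]

section TauWith

variable {A B : Type*} [AddCommGroup A] [AddCommGroup B]
  {F G H : Type*} [Group F] [Group G] [Group H] [Finite F] [Finite G] [Finite H]

def admissiblePairs (I : Subgroup (F × G)) (J : Subgroup (G × H)) (K : Subgroup (F × H)) :
    Set (Subgroup (F × G) × Subgroup (G × H)) :=
  {q | q.1 ≤ I ∧ q.2 ≤ J ∧ K ≤ starProd q.1 q.2}

/-- `τ_K^{I,J}` with `σ(U, V)` replaced by an arbitrary weight `w |k₂(U) ∩ k₁(V)|`. -/
noncomputable def tauWith (w : ℕ → A) (I : Subgroup (F × G)) (J : Subgroup (G × H))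
    (K : Subgroup (F × H)) : A :=
  ∑ᶠ q ∈ admissiblePairs I J K,
    (moeb q.1 I * moeb q.2 J) • w (Nat.card ↥(k2 q.1 ⊓ k1 q.2))

theorem tau_eq_tauWith {𝕂 : Type*} [Field 𝕂] (ℓ : ℕ+ →* 𝕂ˣ) (I : Subgroup (F × G))
    (J : Subgroup (G × H)) (K : Subgroup (F × H)) :
    tau ℓ I J K = tauWith (fun d => ((ℓ d.toPNat' : 𝕂ˣ) : 𝕂)) I J K :=
  finsum_mem_congr rfl fun q _ => by
    rw [sigmaC, ellG, zsmul_eq_mul, Int.cast_mul, ← PNat.coe_toPNat' ⟨_, Nat.card_pos⟩,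
      PNat.mk_coe]

theorem map_tauWith {Φ : Type*} [FunLike Φ A B] [AddMonoidHomClass Φ A B] (f : Φ) (w : ℕ → A)
    (I : Subgroup (F × G)) (J : Subgroup (G × H)) (K : Subgroup (F × H)) :
    f (tauWith w I J K) = tauWith (f ∘ w) I J K := by
  rw [tauWith, ← AddMonoidHom.coe_coe, AddMonoidHom.map_finsum_mem _ _ (Set.toFinite _)]
  simp only [map_zsmul, AddMonoidHom.coe_coe]
  rfl

theorem tauWith_congr {w w' : ℕ → A} {I : Subgroup (F × G)} {J : Subgroup (G × H)}
    {K : Subgroup (F × H)}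
    (h : ∀ q ∈ admissiblePairs I J K,
      w (Nat.card ↥(k2 q.1 ⊓ k1 q.2)) = w' (Nat.card ↥(k2 q.1 ⊓ k1 q.2))) :
    tauWith w I J K = tauWith w' I J K :=
  finsum_mem_congr rfl fun q hq => by rw [h q hq]

theorem tauWith_mem (S : AddSubgroup A) {w : ℕ → A} {I : Subgroup (F × G)}
    {J : Subgroup (G × H)} {K : Subgroup (F × H)}
    (h : ∀ q ∈ admissiblePairs I J K, w (Nat.card ↥(k2 q.1 ⊓ k1 q.2)) ∈ S) :
    tauWith w I J K ∈ S :=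
  finsum_mem_induction (· ∈ S) S.zero_mem (fun _ _ => S.add_mem)
    fun q hq => S.zsmul_mem (h q hq) _

end TauWith

section TauMatrix

variable {A B : Type*} [AddCommGroup A] [AddCommGroup B]
  (E L : Type*) [Group E] [Group L] [Finite E] [Finite L]

noncomputable def tauMatrix (w : ℕ → A) :
    Matrix {f : L →* E // Function.Surjective f} {f : L →* E // Function.Surjective f} A :=
  Matrix.of fun φ ψ => tauWith w (graphL φ.1) (graphR ψ.1) (diagSubgroup E)

variable {E L}

theorem of_tau_eq_tauMatrix {𝕂 : Type*} [Field 𝕂] (ℓ : ℕ+ →* 𝕂ˣ) :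
    Matrix.of (fun φ ψ : {f : L →* E // Function.Surjective f} =>
      tau ℓ (graphL φ.1) (graphR ψ.1) (diagSubgroup E)) =
      tauMatrix E L fun d => ((ℓ d.toPNat' : 𝕂ˣ) : 𝕂) :=
  Matrix.ext fun _ _ => tau_eq_tauWith ℓ _ _ _

theorem tauMatrix_map {Φ : Type*} [FunLike Φ A B] [AddMonoidHomClass Φ A B] (f : Φ) (w : ℕ → A) :
    (tauMatrix E L w).map f = tauMatrix E L (f ∘ w) :=
  Matrix.ext fun _ _ => map_tauWith f w _ _ _

theorem tauMatrix_congr {w w' : ℕ → A} (h : ∀ d, d ∣ Nat.card L / Nat.card E → w d = w' d) :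
    tauMatrix E L w = tauMatrix E L w' :=
  Matrix.ext fun φ _ => tauWith_congr fun _ hq => h _ (card_inf_dvd φ.2 hq.1)

theorem tauMatrix_mem (S : AddSubgroup A) {w : ℕ → A}
    (h : ∀ d, d ∣ Nat.card L / Nat.card E → w d ∈ S)
    (φ ψ : {f : L →* E // Function.Surjective f}) : tauMatrix E L w φ ψ ∈ S :=
  tauWith_mem S fun _ hq => h _ (card_inf_dvd φ.2 hq.1)

theorem tauMatrix_indicator_eq_one {R : Type*} [AddCommGroupWithOne R] :
    tauMatrix E L (fun d => if d = Nat.card L / Nat.card E then (1 : R) else 0) = 1 := by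
  ext φ ψ
  rw [tauMatrix, Matrix.of_apply, tauWith,
    finsum_mem_eq_finite_toFinset_sum _ (Set.toFinite (admissiblePairs _ _ (diagSubgroup E)))]
  have hterm : ∀ q ∈ admissiblePairs (graphL φ.1) (graphR ψ.1) (diagSubgroup E),
      q ≠ (graphL φ.1, graphR φ.1) ∨ φ ≠ ψ →
      (moeb q.1 (graphL φ.1) * moeb q.2 (graphR ψ.1)) •
        (if Nat.card ↥(k2 q.1 ⊓ k1 q.2) = Nat.card L / Nat.card E then (1 : R) else 0) = 0 := by
    rintro ⟨U, V⟩ ⟨hU, hV, hΔ⟩ hne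
    rw [if_neg, smul_zero]
    intro hcard
    obtain ⟨hφψ, rfl, rfl⟩ := eq_graph_of_card_inf_ge φ.2 ψ.2 hU hV hΔ hcard.ge
    exact hne.elim (· (by rw [hφψ])) (· (Subtype.ext hφψ))
  by_cases hφψ : φ = ψ
  · subst hφψ
    have hmem : (graphL φ.1, graphR φ.1) ∈
        (Set.toFinite (admissiblePairs (graphL φ.1) (graphR φ.1) (diagSubgroup E))).toFinset :=
      (Set.Finite.mem_toFinset _).mpr ⟨le_rfl, le_rfl, diagSubgroup_le_starProd_graph φ.2⟩
    rw [Finset.sum_eq_single_of_mem _ hmem fun q hq hne =>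
        hterm q ((Set.Finite.mem_toFinset _).mp hq) (.inl hne),
      Matrix.one_apply_eq]
    simp only [k2_graphL, k1_graphR, inf_idem, card_ker_of_surjective φ.2, if_true, moeb_self,
      mul_one, one_smul]
  · rw [Finset.sum_eq_zero fun q hq => hterm q ((Set.Finite.mem_toFinset _).mp hq) (.inr hφψ),
      Matrix.one_apply_ne hφψ]

theorem det_tauMatrix_X_pow_cardFactors_ne_zero {R : Type*} [CommRing R] [Nontrivial R]
    (hm : Nat.card L / Nat.card E ≠ 0) :
    (tauMatrix E L fun d => (X : R[X]) ^ Ω d).det ≠ 0 := by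
  set K := Ω (Nat.card L / Nat.card E)
  have hdeg : ∀ φ ψ, (tauMatrix E L (fun d => (X : R[X]) ^ Ω d) φ ψ).natDegree ≤ K :=
    fun φ ψ => natDegree_le_iff_degree_le.mpr <| mem_degreeLE.mp <|
      tauMatrix_mem (degreeLE R K).toAddSubgroup (fun d hd =>
        mem_degreeLE.mpr <| (degree_X_pow_le _).trans <| WithBot.coe_le_coe.mpr <|
          ArithmeticFunction.cardFactors_le_of_dvd hm hd) φ ψ
  have htop : (tauMatrix E L fun d => (X : R[X]) ^ Ω d).map (fun p => p.coeff K) = 1 := by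
    refine (tauMatrix_map (lcoeff R K) _).trans
      ((tauMatrix_congr fun d hd => ?_).trans tauMatrix_indicator_eq_one)
    rw [Function.comp_apply, lcoeff_apply, coeff_X_pow]
    exact if_congr (eq_comm.trans (ArithmeticFunction.cardFactors_eq_iff_of_dvd hm hd)) rfl rfl
  intro h
  have hcoeff := Matrix.coeff_det_of_natDegree_le _ hdeg
  rw [htop, Matrix.det_one, h, coeff_zero] at hcoeff
  exact zero_ne_one hcoeff

end TauMatrix

/-- If the values of `ℓ` at the prime divisors of `|L|` are algebraically independent
over `ℚ`, then the matrix `T_E^L`, indexed by the surjections `L → E`, with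
`(φ, ψ)`-entry `τ_{Δ(E)}^{◁(φ), ▷(ψ)}`, is invertible. -/
theorem det_tau_matrix_ne_zero {𝕂 : Type*} [Field 𝕂] [CharZero 𝕂] (ℓ : ℕ+ →* 𝕂ˣ)
    (E L : Type*) [Group E] [Group L] [Finite E] [Finite L]
    (hepi : ∃ f : L →* E, Function.Surjective f)
    (hind : AlgebraicIndependent ℚ fun q : {q : ℕ // q.Prime ∧ q ∣ Nat.card L} =>
      ((ℓ ⟨q.1, q.2.1.pos⟩ : 𝕂ˣ) : 𝕂)) :
    (Matrix.of fun φ ψ : {f : L →* E // Function.Surjective f} =>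
        tau ℓ (graphL φ.1) (graphR ψ.1) (diagSubgroup E)).det ≠ 0 := by
  obtain ⟨f₀, hf₀⟩ := hepi
  have hm : Nat.card L / Nat.card E ≠ 0 := card_ker_of_surjective hf₀ ▸ Nat.card_pos.ne'
  have hmN : Nat.card L / Nat.card E ∣ Nat.card L :=
    card_ker_of_surjective hf₀ ▸ Subgroup.card_subgroup_dvd_card _
  let P := tauMatrix E L (Nat.factorizationMonomial ℚ (Nat.card L))
  have hPT : P.map (MvPolynomial.aeval fun q => (Units.coeHom 𝕂).comp ℓ ⟨q.1, q.2.1.pos⟩) =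
      Matrix.of fun φ ψ => tau ℓ (graphL φ.1) (graphR ψ.1) (diagSubgroup E) :=
    (tauMatrix_map _ _).trans <| (tauMatrix_congr fun d hd =>
      Nat.aeval_factorizationMonomial_eq_toPNat' _ Nat.card_pos.ne' (hd.trans hmN)).trans
        (of_tau_eq_tauMatrix ℓ).symm
  have hPX : P.map (MvPolynomial.aeval fun _ => (X : ℚ[X])) = tauMatrix E L fun d => X ^ Ω d :=
    (tauMatrix_map _ _).trans <|
      tauMatrix_congr fun d hd => Nat.aeval_X_factorizationMonomial (hd.trans hmN)
  have hP : P.det ≠ 0 := fun h => det_tauMatrix_X_pow_cardFactors_ne_zero hm <| by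
    rw [← hPX, ← AlgHom.mapMatrix_apply, ← AlgHom.map_det, h, map_zero]
  rw [← hPT, ← AlgHom.mapMatrix_apply, ← AlgHom.map_det]
  exact (map_ne_zero_iff _ (algebraicIndependent_iff_injective_aeval.mp hind)).mpr hP

end SubgroupCat
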